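/- arXiv:2407.13356 — 5 statements merged into one kernel-verified Lean document; each statement's English description precedes it below -/
import Mathlib

section
/- Let H be a real inner product space with bilinear forms t, s : H × H → ℝ satisfying ‖u‖² ≤ t(u,u) and s(u,v) ≤ ρ‖u‖‖v‖ with 0 ≤ ρ < 1. Suppose R₀ : H → H is a linear map such that t(R₀v + v, w) = s(v, w) for all v, w ∈ H. Then for every v ∈ H, ‖v‖ ≤ ‖R₀v‖/(1−ρ). -/
theorem le_of_sq_le_mul_self {a b : ℝ} (ha : 0 ≤ a) (hb : 0 ≤ b) (h : a ^ 2 ≤ b * a) : a ≤ b := by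
  rcases ha.eq_or_lt with rfl | ha
  · exact hb
  · exact le_of_mul_le_mul_right (by rwa [← sq]) ha

theorem norm_le_mul_norm_of_coercive {E : Type*} [SeminormedAddGroup E] {t s : E → E → ℝ}
    {ρ : ℝ} (hρ : 0 ≤ ρ) (ht : ∀ u, ‖u‖ ^ 2 ≤ t u u) (hs : ∀ u v, s u v ≤ ρ * ‖u‖ * ‖v‖)
    {u v : E} (h : t u u = s v u) : ‖u‖ ≤ ρ * ‖v‖ :=
  le_of_sq_le_mul_self (norm_nonneg u) (by positivity) <|
    calc ‖u‖ ^ 2 ≤ t u u := ht u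
      _ = s v u := h
      _ ≤ ρ * ‖v‖ * ‖u‖ := hs v u

theorem norm_le_div_one_sub_of_norm_add_le {E : Type*} [SeminormedAddGroup E] {ρ : ℝ}
    (hρ : ρ < 1) {r v : E} (h : ‖r + v‖ ≤ ρ * ‖v‖) : ‖v‖ ≤ ‖r‖ / (1 - ρ) := by
  have hv : ‖v‖ ≤ ‖r‖ + ‖r + v‖ := by
    simpa using norm_add_le (-r) (r + v)
  rw [le_div_iff₀ (sub_pos.mpr hρ)]
  linarith

/-- Quantitative lower bound for the linearized preconditioned residual operator
(equation (3.3)): if `t (R₀ v + v) w = s v w` for all `v, w`, then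
`‖v‖ ≤ ‖R₀ v‖ / (1 - ρ)`. -/
theorem error_bounded_by_residual
    {H : Type*} [NormedAddCommGroup H] [InnerProductSpace ℝ H]
    (t s : H →ₗ[ℝ] H →ₗ[ℝ] ℝ) (ρ : ℝ) (hρ0 : 0 ≤ ρ) (hρ1 : ρ < 1)
    (ht : ∀ u : H, ‖u‖ ^ 2 ≤ t u u)
    (hs : ∀ u v : H, s u v ≤ ρ * ‖u‖ * ‖v‖)
    (R₀ : H →ₗ[ℝ] H)
    (hR : ∀ v w : H, t (R₀ v + v) w = s v w) :
    ∀ v : H, ‖v‖ ≤ ‖R₀ v‖ / (1 - ρ) := fun v =>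
  norm_le_div_one_sub_of_norm_add_le hρ1 <|
    norm_le_mul_norm_of_coercive (t := fun a b => t a b) (s := fun a b => s a b) hρ0 ht hs
      (hR v _)
end

section
/- Let H be a real inner product space with bilinear forms t, s satisfying ‖u‖² ≤ t(u,u) and s(u,v) ≤ ρ‖u‖‖v‖ with 0 ≤ ρ < 1, and let R₀ : H → H be linear with t(R₀v + v, w) = s(v, w) for all v, w. If u solves t(u,v) = s(u,v) + ℓ(v) for all v (with ℓ a linear functional), and R(w) ∈ H is defined by t(R(w), v) = ℓ(v) − t(w,v) + s(w,v) for all v, then for every w ∈ H, ‖u − w‖ ≤ ‖R(w)‖/(1−ρ). -/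
/-!
Subtracting the residual equation from the equation for `u` gives `t (u - w - R w) v = s (u - w) v`
for every `v`. Testing with `v = u - w - R w`, coercivity of `t` and the `ρ`-bound on `s` give
`‖u - w - R w‖ ≤ ρ ‖u - w‖`, and the triangle inequality turns this contraction estimate into
`(1 - ρ) ‖u - w‖ ≤ ‖R w‖`.
-/

section BilinearForms

variable {H : Type*} [NormedAddCommGroup H] [Module ℝ H] (t s : H →ₗ[ℝ] H →ₗ[ℝ] ℝ)

theorem apply_error_sub_residual {ℓ : H →ₗ[ℝ] ℝ} {u w r : H}
    (hu : ∀ v, t u v = s u v + ℓ v) (hr : ∀ v, t r v = ℓ v - t w v + s w v) (v : H) :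
    t (u - w - r) v = s (u - w) v := by
  simp only [map_sub, LinearMap.sub_apply, hu, hr]
  ring

theorem norm_le_of_coercive_of_apply_self_eq {ρ : ℝ} (hρ0 : 0 ≤ ρ)
    (ht : ∀ u, ‖u‖ ^ 2 ≤ t u u) (hs : ∀ u v, s u v ≤ ρ * ‖u‖ * ‖v‖) {d e : H}
    (h : t d d = s e d) : ‖d‖ ≤ ρ * ‖e‖ := by
  have hsq : ‖d‖ * ‖d‖ ≤ ρ * ‖e‖ * ‖d‖ := by
    calc ‖d‖ * ‖d‖ = ‖d‖ ^ 2 := (sq _).symm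
      _ ≤ t d d := ht d
      _ = s e d := h
      _ ≤ ρ * ‖e‖ * ‖d‖ := hs e d
  rcases (norm_nonneg d).eq_or_lt with hd | hd
  · rw [← hd]
    positivity
  · exact le_of_mul_le_mul_right hsq hd

end BilinearForms

theorem norm_le_div_one_sub_of_norm_sub_le {E : Type*} [SeminormedAddCommGroup E] {ρ : ℝ}
    (hρ1 : ρ < 1) {e r : E} (h : ‖e - r‖ ≤ ρ * ‖e‖) : ‖e‖ ≤ ‖r‖ / (1 - ρ) := by
  have htri : ‖e‖ ≤ ‖r‖ + ‖e - r‖ := by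
    simpa using norm_add_le r (e - r)
  rw [le_div_iff₀ (sub_pos.mpr hρ1)]
  linarith

theorem error_residual_bound_general
    {H : Type*} [NormedAddCommGroup H] [InnerProductSpace ℝ H]
    (t s : H →ₗ[ℝ] H →ₗ[ℝ] ℝ) (ρ : ℝ) (hρ0 : 0 ≤ ρ) (hρ1 : ρ < 1)
    (ht : ∀ u : H, ‖u‖ ^ 2 ≤ t u u)
    (hs : ∀ u v : H, s u v ≤ ρ * ‖u‖ * ‖v‖)
    (ℓ : H →ₗ[ℝ] ℝ) (u : H)
    (hu : ∀ v : H, t u v = s u v + ℓ v)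
    (R : H → H)
    (hR : ∀ w v : H, t (R w) v = ℓ v - t w v + s w v) :
    ∀ w : H, ‖u - w‖ ≤ ‖R w‖ / (1 - ρ) := by
  intro w
  have hcontr : ‖u - w - R w‖ ≤ ρ * ‖u - w‖ :=
    norm_le_of_coercive_of_apply_self_eq t s hρ0 ht hs
      (apply_error_sub_residual t s hu (hR w) _)
  exact norm_le_div_one_sub_of_norm_sub_le hρ1 hcontr

/-- Error–residual bound (Lemma 3.3): if `u` solves `t u v = s u v + ℓ v` and
`R w` is the preconditioned residual, `t (R w) v = ℓ v - t w v + s w v`, then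
`‖u - w‖ ≤ ‖R w‖ / (1 - ρ)`. -/
theorem error_residual_bound
    {H : Type*} [NormedAddCommGroup H] [InnerProductSpace ℝ H]
    (t s : H →ₗ[ℝ] H →ₗ[ℝ] ℝ) (ρ : ℝ) (hρ0 : 0 ≤ ρ) (hρ1 : ρ < 1)
    (ht : ∀ u : H, ‖u‖ ^ 2 ≤ t u u)
    (hs : ∀ u v : H, s u v ≤ ρ * ‖u‖ * ‖v‖)
    (R₀ : H →ₗ[ℝ] H)
    (hR₀ : ∀ v w : H, t (R₀ v + v) w = s v w)
    (ℓ : H →ₗ[ℝ] ℝ) (u : H)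
    (hu : ∀ v : H, t u v = s u v + ℓ v)
    (R : H → H)
    (hR : ∀ w v : H, t (R w) v = ℓ v - t w v + s w v) :
    ∀ w : H, ‖u - w‖ ≤ ‖R w‖ / (1 - ρ) :=
  error_residual_bound_general t s ρ hρ0 hρ1 ht hs ℓ u hu R hR
end

section
/- Let H be a real Hilbert space, t, s bilinear forms with ‖u‖² ≤ t(u,u) and s(u,v) ≤ ρ‖u‖‖v‖ for 0 ≤ ρ < 1, u ∈ H the solution of t(u,v) = s(u,v) + ℓ(v) for all v, and R the preconditioned residual map t(R(w), v) = ℓ(v) − t(w,v) + s(w,v). Define a sequence by: u_{k+1/2} solves t(u_{k+1/2}, v) = s(u_k, v) + ℓ(v) for all v, and u_{k+1} = u_{k+1/2} + c_k where c_k is any element of a subspace W minimizing ‖R(u_{k+1/2} + c)‖ over c ∈ W. Then ‖u − u_k‖ ≤ ρ^k ‖R(u_0)‖ / (1−ρ) for all k ≥ 0. -/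
/-- Main convergence theorem (Theorem 1.2 / 5.1): the residual-minimization
accelerated source iteration converges linearly with rate `ρ`:
`‖u - u_k‖ ≤ ρ^k ‖R(u_0)‖ / (1 - ρ)`. -/
theorem accelerated_source_iteration_convergence
    {H : Type*} [NormedAddCommGroup H] [InnerProductSpace ℝ H] [CompleteSpace H]
    (t s : H →ₗ[ℝ] H →ₗ[ℝ] ℝ) (ρ : ℝ) (hρ0 : 0 ≤ ρ) (hρ1 : ρ < 1)
    (ht : ∀ u : H, ‖u‖ ^ 2 ≤ t u u)
    (hs : ∀ u v : H, s u v ≤ ρ * ‖u‖ * ‖v‖)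
    (ℓ : H →ₗ[ℝ] ℝ) (u : H)
    (hu : ∀ v : H, t u v = s u v + ℓ v)
    (R : H → H)
    (hR : ∀ w v : H, t (R w) v = ℓ v - t w v + s w v)
    (W : Submodule ℝ H)
    (useq uhalf c : ℕ → H)
    (hhalf : ∀ k, ∀ v : H, t (uhalf k) v = s (useq k) v + ℓ v)
    (hcW : ∀ k, c k ∈ W)
    (hmin : ∀ k, ∀ c' ∈ W, ‖R (uhalf k + c k)‖ ≤ ‖R (uhalf k + c')‖)
    (hstep : ∀ k, useq (k + 1) = uhalf k + c k) :
    ∀ k, ‖u - useq k‖ ≤ ρ ^ k * ‖R (useq 0)‖ / (1 - ρ) := by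
  -- coercivity implies definiteness
  have hzero : ∀ x : H, t x x ≤ 0 → x = 0 := by
    intro x hx
    have h1 : ‖x‖ ^ 2 ≤ 0 := le_trans (ht x) hx
    have h2 : ‖x‖ = 0 := by nlinarith [norm_nonneg x]
    simpa using h2
  -- from ‖x‖² ≤ C‖x‖ with C ≥ 0 deduce ‖x‖ ≤ C
  have hcancel : ∀ (x : H) (C : ℝ), 0 ≤ C → ‖x‖ ^ 2 ≤ C * ‖x‖ → ‖x‖ ≤ C := by
    intro x C hC h
    rcases eq_or_lt_of_le (norm_nonneg x) with h0 | h0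
    · linarith [h0.symm]
    · nlinarith
  -- error–residual bound
  have herr : ∀ w : H, ‖u - w‖ ≤ ‖R w‖ / (1 - ρ) := by
    intro w
    have h1 : ∀ v : H, t (u - w - R w) v = s (u - w) v := by
      intro v
      have h2 := hR w v
      have h3 := hu v
      simp only [map_sub, LinearMap.sub_apply] at *
      linarith
    have h4 : ‖u - w - R w‖ ≤ ρ * ‖u - w‖ := by
      refine hcancel _ _ (by positivity) ?_
      calc ‖u - w - R w‖ ^ 2 ≤ t (u - w - R w) (u - w - R w) := ht _
        _ = s (u - w) (u - w - R w) := h1 _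
        _ ≤ ρ * ‖u - w‖ * ‖u - w - R w‖ := hs _ _
        _ = ρ * ‖u - w‖ * ‖u - w - R w‖ := rfl
    have h5 : ‖u - w‖ ≤ ‖u - w - R w‖ + ‖R w‖ := by
      have := norm_add_le (u - w - R w) (R w)
      simpa using this
    rw [le_div_iff₀ (by linarith)]
    nlinarith
  -- uhalf k - useq k = R (useq k)
  have hdiff : ∀ k, uhalf k - useq k = R (useq k) := by
    intro k
    have h1 : ∀ v : H, t (uhalf k - useq k - R (useq k)) v = 0 := by
      intro v
      have h2 := hR (useq k) v
      have h3 := hhalf k v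
      simp only [map_sub, LinearMap.sub_apply] at *
      linarith
    have h2 := hzero _ (le_of_eq (h1 _))
    have : uhalf k - useq k - R (useq k) = 0 := h2
    linear_combination (norm := abel) this
  -- residual contraction for the half step
  have hhalfres : ∀ k, ‖R (uhalf k)‖ ≤ ρ * ‖R (useq k)‖ := by
    intro k
    have h1 : ∀ v : H, t (R (uhalf k)) v = s (R (useq k)) v := by
      intro v
      have h2 := hR (uhalf k) v
      have h3 := hhalf k v
      have h4 : s (uhalf k) v - s (useq k) v = s (R (useq k)) v := by
        rw [← hdiff k]; simp [map_sub, LinearMap.sub_apply]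
      linarith
    refine hcancel _ _ (by positivity) ?_
    calc ‖R (uhalf k)‖ ^ 2 ≤ t (R (uhalf k)) (R (uhalf k)) := ht _
      _ = s (R (useq k)) (R (uhalf k)) := h1 _
      _ ≤ ρ * ‖R (useq k)‖ * ‖R (uhalf k)‖ := hs _ _
  -- full-step residual contraction
  have hres : ∀ k, ‖R (useq (k + 1))‖ ≤ ρ * ‖R (useq k)‖ := by
    intro k
    have h1 : ‖R (uhalf k + c k)‖ ≤ ‖R (uhalf k)‖ := by
      have := hmin k 0 W.zero_mem
      simpa using this
    rw [hstep k]
    exact le_trans h1 (hhalfres k)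
  -- induction on residual norm
  have hgeom : ∀ k, ‖R (useq k)‖ ≤ ρ ^ k * ‖R (useq 0)‖ := by
    intro k
    induction k with
    | zero => simp
    | succ n ih =>
      calc ‖R (useq (n + 1))‖ ≤ ρ * ‖R (useq n)‖ := hres n
        _ ≤ ρ * (ρ ^ n * ‖R (useq 0)‖) := by
          exact mul_le_mul_of_nonneg_left ih hρ0
        _ = ρ ^ (n + 1) * ‖R (useq 0)‖ := by ring
  intro k
  calc ‖u - useq k‖ ≤ ‖R (useq k)‖ / (1 - ρ) := herr _
    _ ≤ ρ ^ k * ‖R (useq 0)‖ / (1 - ρ) := by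
      gcongr
      exact hgeom k
end

section
/- Let H be a real Hilbert space, t, s bilinear forms with ‖u‖² ≤ t(u,u) and s(u,v) ≤ ρ‖u‖‖v‖ for 0 ≤ ρ < 1, and R the preconditioned residual map as above. For the sequence u_k generated by the half-step t(u_{k+1/2}, v) = s(u_k, v) + ℓ(v) and residual-minimizing update u_{k+1} = u_{k+1/2} + c_k with c_k ∈ W minimizing ‖R(u_{k+1/2}+c)‖ over a subspace W containing 0, the residuals decay monotonically: ‖R(u_{k+1})‖ ≤ ρ‖R(u_k)‖ for all k ≥ 0. -/
/-!
Since `R u` is the `t`-Riesz representative of the residual `ℓ - t u + s u`, the half-step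
`t u' = s u + ℓ` says exactly that `R u = u' - u`, and then `t (R u') = s (R u)`. Testing this
with `R u'` and using coercivity of `t` and the bound on `s` gives `‖R u'‖ ≤ ρ ‖R u‖`. The
residual-minimizing correction can only do better than the correction `0 ∈ W`.
-/

section CoerciveForm

variable {E : Type*} [NormedAddCommGroup E] [Module ℝ E] {t s : E →ₗ[ℝ] E →ₗ[ℝ] ℝ}

theorem eq_of_forall_apply_eq_of_coercive (ht : ∀ u : E, ‖u‖ ^ 2 ≤ t u u) {x y : E}
    (h : ∀ v, t x v = t y v) : x = y := by
  have hsq : ‖x - y‖ ^ 2 ≤ 0 := by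
    simpa only [map_sub, LinearMap.sub_apply, h, sub_self] using ht (x - y)
  exact sub_eq_zero.mp (norm_eq_zero.mp (pow_eq_zero_iff two_ne_zero |>.mp
    (le_antisymm hsq (sq_nonneg _))))

theorem norm_le_of_forall_coercive_apply_eq {ρ : ℝ} (hρ : 0 ≤ ρ)
    (ht : ∀ u : E, ‖u‖ ^ 2 ≤ t u u) (hs : ∀ u v : E, s u v ≤ ρ * ‖u‖ * ‖v‖) {x y : E}
    (h : ∀ v, t x v = s y v) : ‖x‖ ≤ ρ * ‖y‖ := by
  have hsq : ‖x‖ * ‖x‖ ≤ ρ * ‖y‖ * ‖x‖ :=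
    calc ‖x‖ * ‖x‖ = ‖x‖ ^ 2 := (sq _).symm
      _ ≤ t x x := ht x
      _ = s y x := h x
      _ ≤ ρ * ‖y‖ * ‖x‖ := hs y x
  rcases (norm_nonneg x).eq_or_lt with hx | hx
  · rw [← hx]
    positivity
  · exact le_of_mul_le_mul_right hsq hx

end CoerciveForm

section HalfStep

variable {E : Type*} [NormedAddCommGroup E] [Module ℝ E] {t s : E →ₗ[ℝ] E →ₗ[ℝ] ℝ}
  {ℓ : E →ₗ[ℝ] ℝ} {R : E → E}

theorem residual_eq_sub_of_half_step (ht : ∀ u : E, ‖u‖ ^ 2 ≤ t u u)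
    (hR : ∀ w v : E, t (R w) v = ℓ v - t w v + s w v) {u u' : E}
    (hhalf : ∀ v, t u' v = s u v + ℓ v) : R u = u' - u :=
  eq_of_forall_apply_eq_of_coercive ht fun v => by
    simp only [hR, map_sub, LinearMap.sub_apply, hhalf]
    ring

theorem residual_half_step_apply (ht : ∀ u : E, ‖u‖ ^ 2 ≤ t u u)
    (hR : ∀ w v : E, t (R w) v = ℓ v - t w v + s w v) {u u' : E}
    (hhalf : ∀ v, t u' v = s u v + ℓ v) (v : E) : t (R u') v = s (R u) v := by
  rw [residual_eq_sub_of_half_step ht hR hhalf, hR, hhalf]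
  simp only [map_sub, LinearMap.sub_apply]
  ring

end HalfStep

theorem accelerated_source_iteration_residual_decay_general
    {H : Type*} [NormedAddCommGroup H] [InnerProductSpace ℝ H]
    (t s : H →ₗ[ℝ] H →ₗ[ℝ] ℝ) (ρ : ℝ) (hρ0 : 0 ≤ ρ)
    (ht : ∀ u : H, ‖u‖ ^ 2 ≤ t u u)
    (hs : ∀ u v : H, s u v ≤ ρ * ‖u‖ * ‖v‖)
    (ℓ : H →ₗ[ℝ] ℝ)
    (R : H → H)
    (hR : ∀ w v : H, t (R w) v = ℓ v - t w v + s w v)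
    (W : Submodule ℝ H)
    (useq uhalf c : ℕ → H)
    (hhalf : ∀ k, ∀ v : H, t (uhalf k) v = s (useq k) v + ℓ v)
    (hmin : ∀ k, ∀ c' ∈ W, ‖R (uhalf k + c k)‖ ≤ ‖R (uhalf k + c')‖)
    (hstep : ∀ k, useq (k + 1) = uhalf k + c k) :
    ∀ k, ‖R (useq (k + 1))‖ ≤ ρ * ‖R (useq k)‖ := by
  intro k
  calc ‖R (useq (k + 1))‖ ≤ ‖R (uhalf k + 0)‖ := hstep k ▸ hmin k 0 W.zero_mem
    _ = ‖R (uhalf k)‖ := by rw [add_zero]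
    _ ≤ ρ * ‖R (useq k)‖ :=
      norm_le_of_forall_coercive_apply_eq hρ0 ht hs (residual_half_step_apply ht hR (hhalf k))

/-- Monotone residual decay (Theorem 5.1): for the accelerated source iteration
with residual minimization over a subspace `W` (which contains `0`),
`‖R(u_{k+1})‖ ≤ ρ ‖R(u_k)‖`. -/
theorem accelerated_source_iteration_residual_decay
    {H : Type*} [NormedAddCommGroup H] [InnerProductSpace ℝ H] [CompleteSpace H]
    (t s : H →ₗ[ℝ] H →ₗ[ℝ] ℝ) (ρ : ℝ) (hρ0 : 0 ≤ ρ) (hρ1 : ρ < 1)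
    (ht : ∀ u : H, ‖u‖ ^ 2 ≤ t u u)
    (hs : ∀ u v : H, s u v ≤ ρ * ‖u‖ * ‖v‖)
    (ℓ : H →ₗ[ℝ] ℝ)
    (R : H → H)
    (hR : ∀ w v : H, t (R w) v = ℓ v - t w v + s w v)
    (W : Submodule ℝ H)
    (useq uhalf c : ℕ → H)
    (hhalf : ∀ k, ∀ v : H, t (uhalf k) v = s (useq k) v + ℓ v)
    (hcW : ∀ k, c k ∈ W)
    (hmin : ∀ k, ∀ c' ∈ W, ‖R (uhalf k + c k)‖ ≤ ‖R (uhalf k + c')‖)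
    (hstep : ∀ k, useq (k + 1) = uhalf k + c k) :
    ∀ k, ‖R (useq (k + 1))‖ ≤ ρ * ‖R (useq k)‖ :=
  accelerated_source_iteration_residual_decay_general t s ρ hρ0 ht hs ℓ R hR W useq uhalf c hhalf
    hmin hstep
end

section
/- Let H be a real Hilbert space with bilinear forms t, s satisfying ‖u‖² ≤ t(u,u) and s(u,v) ≤ ρ‖u‖‖v‖ for 0 ≤ ρ < 1, and let H_h ⊆ H be any closed subspace. Assume that for every bounded linear functional ℓ on H the Galerkin problem t(u_h, v_h) = s(u_h, v_h) + ℓ(v_h) for all v_h ∈ H_h has a solution u_h ∈ H_h, and that the pure transport Galerkin problems t(w_h, v_h) = g(v_h) for all v_h ∈ H_h are solvable in H_h. Then the Galerkin analogue of the accelerated iteration (half-step solving t(u_{h,k+1/2}, v_h) = s(u_{h,k}, v_h) + ℓ(v_h), followed by a residual-minimizing correction over any subspace W_h ⊆ H_h containing 0) satisfies ‖u_h − u_{h,k}‖ ≤ ρ^k ‖R_h(u_{h,0})‖/(1−ρ), where R_h is the discrete preconditioned residual defined by t(R_h(w_h), v_h) = ℓ(v_h) − t(w_h, v_h) + s(w_h,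 v_h) for all v_h ∈ H_h. -/
/-!
The inequalities `‖u‖² ≤ t(u,u)` and `s(u,v) ≤ ρ‖u‖‖v‖` restrict to any subspace `K`, so whenever
`t(v,·) = s(e,·)` on `K` with `v ∈ K`, testing with `v` gives `‖v‖ ≤ ρ‖e‖`. The residual of `u_k` is
the half-step increment `u_{k+1/2} - u_k`, and the residual of `u_{k+1/2}` satisfies such an identity
with `e = u_{k+1/2} - u_k`; since the correction `0` competes in the minimization,
`‖R_h u_{k+1}‖ ≤ ρ‖R_h u_k‖`. For the error, `u_h - w - R_h w` satisfies the identity with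
`e = u_h - w`, whence `‖u_h - w‖ ≤ ‖R_h w‖ / (1 - ρ)`.
-/

section GalerkinForms

variable {E : Type*} [NormedAddCommGroup E] [Module ℝ E]
  {t s : E →ₗ[ℝ] E →ₗ[ℝ] ℝ} {ρ : ℝ} {K : Submodule ℝ E} {ℓ : E → ℝ}

theorem norm_le_of_coercive_of_le_mul_norm (ht : ∀ u : E, ‖u‖ ^ 2 ≤ t u u) {v : E} {C : ℝ}
    (hC : 0 ≤ C) (hv : t v v ≤ C * ‖v‖) : ‖v‖ ≤ C := by
  rcases (norm_nonneg v).eq_or_lt with hv0 | hv0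
  · rw [← hv0]; exact hC
  · nlinarith [(ht v).trans hv]

theorem norm_le_mul_norm_of_form_eq (ht : ∀ u : E, ‖u‖ ^ 2 ≤ t u u)
    (hs : ∀ u v : E, s u v ≤ ρ * ‖u‖ * ‖v‖) (hρ : 0 ≤ ρ) {v e : E} (h : t v v = s e v) :
    ‖v‖ ≤ ρ * ‖e‖ :=
  norm_le_of_coercive_of_le_mul_norm ht (by positivity) (h ▸ hs e v)

theorem eq_of_forall_form_eq (ht : ∀ u : E, ‖u‖ ^ 2 ≤ t u u) {x y : E} (hx : x ∈ K) (hy : y ∈ K)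
    (h : ∀ v ∈ K, t x v = t y v) : x = y := by
  have hxy : t (x - y) (x - y) = 0 := by
    rw [map_sub t x y, LinearMap.sub_apply, h _ (K.sub_mem hx hy), sub_self]
  have : ‖x - y‖ ≤ 0 := norm_le_of_coercive_of_le_mul_norm ht le_rfl (by rw [hxy, zero_mul])
  exact sub_eq_zero.mp (norm_le_zero_iff.mp this)

theorem norm_sub_le_div_of_residual (ht : ∀ u : E, ‖u‖ ^ 2 ≤ t u u)
    (hs : ∀ u v : E, s u v ≤ ρ * ‖u‖ * ‖v‖) (hρ0 : 0 ≤ ρ) (hρ1 : ρ < 1)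
    {u w r : E} (hu : u ∈ K) (hu_eq : ∀ v ∈ K, t u v = s u v + ℓ v) (hw : w ∈ K)
    (hr : r ∈ K) (hr_eq : ∀ v ∈ K, t r v = ℓ v - t w v + s w v) :
    ‖u - w‖ ≤ ‖r‖ / (1 - ρ) := by
  set v := u - w - r
  have hv : v ∈ K := K.sub_mem (K.sub_mem hu hw) hr
  have htv : t v v = s (u - w) v := by
    rw [show t v = t u - t w - t r by simp only [v, map_sub], map_sub s u w]
    simp only [LinearMap.sub_apply]
    rw [hu_eq v hv, hr_eq v hv]
    ring
  have hv_le : ‖v‖ ≤ ρ * ‖u - w‖ := norm_le_mul_norm_of_form_eq ht hs hρ0 htv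
  have herr : ‖u - w‖ ≤ ‖r‖ + ρ * ‖u - w‖ :=
    calc ‖u - w‖ = ‖r + v‖ := by rw [add_sub_cancel]
      _ ≤ ‖r‖ + ‖v‖ := norm_add_le r v
      _ ≤ ‖r‖ + ρ * ‖u - w‖ := by linarith
  rw [le_div_iff₀ (by linarith)]
  linarith

theorem residual_eq_sub_of_half_step_s14 (ht : ∀ u : E, ‖u‖ ^ 2 ≤ t u u) {u uhalf r : E}
    (hu : u ∈ K) (huhalf : uhalf ∈ K) (hhalf : ∀ v ∈ K, t uhalf v = s u v + ℓ v)
    (hr : r ∈ K) (hr_eq : ∀ v ∈ K, t r v = ℓ v - t u v + s u v) : r = uhalf - u :=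
  eq_of_forall_form_eq ht hr (K.sub_mem huhalf hu) fun v hv => by
    rw [hr_eq v hv, map_sub, LinearMap.sub_apply, hhalf v hv]
    ring

theorem norm_residual_half_step_le (ht : ∀ u : E, ‖u‖ ^ 2 ≤ t u u)
    (hs : ∀ u v : E, s u v ≤ ρ * ‖u‖ * ‖v‖) (hρ : 0 ≤ ρ) {u uhalf r : E}
    (hhalf : ∀ v ∈ K, t uhalf v = s u v + ℓ v)
    (hr : r ∈ K) (hr_eq : ∀ v ∈ K, t r v = ℓ v - t uhalf v + s uhalf v) :
    ‖r‖ ≤ ρ * ‖uhalf - u‖ :=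
  norm_le_mul_norm_of_form_eq ht hs hρ <| by
    rw [hr_eq r hr, hhalf r hr, map_sub, LinearMap.sub_apply]
    ring

theorem norm_residual_correction_le (ht : ∀ u : E, ‖u‖ ^ 2 ≤ t u u)
    (hs : ∀ u v : E, s u v ≤ ρ * ‖u‖ * ‖v‖) (hρ : 0 ≤ ρ) {R : E → E} (hR : ∀ w, R w ∈ K)
    (hR_eq : ∀ w, ∀ v ∈ K, t (R w) v = ℓ v - t w v + s w v) {u uhalf c : E} (hu : u ∈ K)
    (huhalf : uhalf ∈ K) (hhalf : ∀ v ∈ K, t uhalf v = s u v + ℓ v) {W : Submodule ℝ E}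
    (hmin : ∀ c' ∈ W, ‖R (uhalf + c)‖ ≤ ‖R (uhalf + c')‖) :
    ‖R (uhalf + c)‖ ≤ ρ * ‖R u‖ :=
  calc ‖R (uhalf + c)‖ ≤ ‖R uhalf‖ := by simpa using hmin 0 W.zero_mem
    _ ≤ ρ * ‖uhalf - u‖ := norm_residual_half_step_le ht hs hρ hhalf (hR uhalf) (hR_eq uhalf)
    _ = ρ * ‖R u‖ := by
      rw [residual_eq_sub_of_half_step_s14 ht hu huhalf hhalf (hR u) (hR_eq u)]

end GalerkinForms

theorem galerkin_accelerated_source_iteration_convergence_general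
    {H : Type*} [NormedAddCommGroup H] [InnerProductSpace ℝ H]
    (t s : H →ₗ[ℝ] H →ₗ[ℝ] ℝ) (ρ : ℝ) (hρ0 : 0 ≤ ρ) (hρ1 : ρ < 1)
    (ht : ∀ u : H, ‖u‖ ^ 2 ≤ t u u)
    (hs : ∀ u v : H, s u v ≤ ρ * ‖u‖ * ‖v‖)
    (Hh : Submodule ℝ H)
    (ℓ : H →L[ℝ] ℝ) (uh : H) (huhH : uh ∈ Hh)
    (huh : ∀ vh ∈ Hh, t uh vh = s uh vh + ℓ vh)
    (Rh : H → H)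
    (hRhH : ∀ w : H, Rh w ∈ Hh)
    (hRh : ∀ w : H, ∀ vh ∈ Hh, t (Rh w) vh = ℓ vh - t w vh + s w vh)
    (Wh : Submodule ℝ H)
    (useq uhalf c : ℕ → H)
    (huseqH : ∀ k, useq k ∈ Hh) (huhalfH : ∀ k, uhalf k ∈ Hh)
    (hhalf : ∀ k, ∀ vh ∈ Hh, t (uhalf k) vh = s (useq k) vh + ℓ vh)
    (hmin : ∀ k, ∀ c' ∈ Wh, ‖Rh (uhalf k + c k)‖ ≤ ‖Rh (uhalf k + c')‖)
    (hstep : ∀ k, useq (k + 1) = uhalf k + c k) :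
    ∀ k, ‖uh - useq k‖ ≤ ρ ^ k * ‖Rh (useq 0)‖ / (1 - ρ) := by
  have hcontract : ∀ j, ‖Rh (useq (j + 1))‖ ≤ ρ * ‖Rh (useq j)‖ := fun j => by
    rw [hstep j]
    exact norm_residual_correction_le ht hs hρ0 hRhH hRh (huseqH j) (huhalfH j) (hhalf j) (hmin j)
  intro k
  calc ‖uh - useq k‖ ≤ ‖Rh (useq k)‖ / (1 - ρ) :=
        norm_sub_le_div_of_residual ht hs hρ0 hρ1 huhH huh (huseqH k) (hRhH _) (hRh _)
    _ ≤ ρ ^ k * ‖Rh (useq 0)‖ / (1 - ρ) := by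
        gcongr
        exact le_geom (u := fun j => ‖Rh (useq j)‖) hρ0 k fun j _ => hcontract j

/-- Discrete convergence theorem (Theorem 5.1): the structural inequalities
`‖u‖² ≤ t(u,u)` and `s(u,v) ≤ ρ‖u‖‖v‖` are inherited by any closed Galerkin
subspace `H_h`, hence the discrete accelerated source iteration (half transport
step followed by residual minimization over any subspace `W_h ⊆ H_h`) converges
linearly with rate `ρ`: `‖u_h - u_{h,k}‖ ≤ ρ^k ‖R_h(u_{h,0})‖ / (1 - ρ)`. -/
theorem galerkin_accelerated_source_iteration_convergence
    {H : Type*} [NormedAddCommGroup H] [InnerProductSpace ℝ H] [CompleteSpace H]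
    (t s : H →ₗ[ℝ] H →ₗ[ℝ] ℝ) (ρ : ℝ) (hρ0 : 0 ≤ ρ) (hρ1 : ρ < 1)
    (ht : ∀ u : H, ‖u‖ ^ 2 ≤ t u u)
    (hs : ∀ u v : H, s u v ≤ ρ * ‖u‖ * ‖v‖)
    (Hh : Submodule ℝ H) (hHh : IsClosed (Hh : Set H))
    (hGal : ∀ g : H →L[ℝ] ℝ, ∃ wh ∈ Hh, ∀ vh ∈ Hh, t wh vh = s wh vh + g vh)
    (hTrans : ∀ g : H →L[ℝ] ℝ, ∃ wh ∈ Hh, ∀ vh ∈ Hh, t wh vh = g vh)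
    (ℓ : H →L[ℝ] ℝ) (uh : H) (huhH : uh ∈ Hh)
    (huh : ∀ vh ∈ Hh, t uh vh = s uh vh + ℓ vh)
    (Rh : H → H)
    (hRhH : ∀ w : H, Rh w ∈ Hh)
    (hRh : ∀ w : H, ∀ vh ∈ Hh, t (Rh w) vh = ℓ vh - t w vh + s w vh)
    (Wh : Submodule ℝ H) (hWh : Wh ≤ Hh)
    (useq uhalf c : ℕ → H)
    (huseqH : ∀ k, useq k ∈ Hh) (huhalfH : ∀ k, uhalf k ∈ Hh)
    (hhalf : ∀ k, ∀ vh ∈ Hh, t (uhalf k) vh = s (useq k) vh + ℓ vh)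
    (hcW : ∀ k, c k ∈ Wh)
    (hmin : ∀ k, ∀ c' ∈ Wh, ‖Rh (uhalf k + c k)‖ ≤ ‖Rh (uhalf k + c')‖)
    (hstep : ∀ k, useq (k + 1) = uhalf k + c k) :
    ∀ k, ‖uh - useq k‖ ≤ ρ ^ k * ‖Rh (useq 0)‖ / (1 - ρ) :=
  galerkin_accelerated_source_iteration_convergence_general t s ρ hρ0 hρ1 ht hs Hh ℓ uh huhH huh Rh
    hRhH hRh Wh useq uhalf c huseqH huhalfH hhalf hmin hstep
end
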